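/- Let M ∈ ℝ^{T×T} be symmetric positive semidefinite and λ > 0. For any symmetric matrix E with Frobenius norm ‖E‖_F such that I + M/λ + E/λ is positive definite, we have log det(I + M/λ + E/λ) ≤ log det(I + M/λ) + √T · ‖E‖_F / λ. -/

import Mathlib

/-!
`log det` is concave on positive definite matrices, so it lies below its tangent at
`A = I + M/λ`: `log det (A + E/λ) ≤ log det A + tr (A⁻¹ E) / λ`; this follows from
`log x ≤ x - 1` applied to the eigenvalues of `A^{-1/2} (A + E/λ) A^{-1/2}`.
Since `I ≤ A` in the Loewner order, `0 ≤ A⁻¹ ≤ I`, hence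
`‖A⁻¹‖_F² = tr (A⁻¹)² ≤ tr A⁻¹ ≤ T`, and Cauchy–Schwarz for the Frobenius inner product
bounds `tr (A⁻¹ E)` by `√T ‖E‖_F`.
-/

open scoped MatrixOrder ComplexOrder

namespace Matrix

variable {m n 𝕜 : Type*} [Fintype m] [Fintype n]

lemma trace_mul_le_sqrt_mul_sqrt (P : Matrix m n ℝ) (E : Matrix n m ℝ) :
    (P * E).trace ≤ √(∑ i, ∑ j, P i j ^ 2) * √(∑ i, ∑ j, E i j ^ 2) := by
  have h := Real.sum_mul_le_sqrt_mul_sqrt Finset.univ (fun p : m × n => P p.1 p.2)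
    (fun p => E p.2 p.1)
  simp only [Fintype.sum_prod_type] at h
  rwa [Finset.sum_comm (f := fun i j => E j i ^ 2)] at h

variable [DecidableEq n]

lemma inv_le_one_of_one_le [RCLike 𝕜] {A : Matrix n n 𝕜} (hA : 1 ≤ A) : A⁻¹ ≤ 1 := by
  set N := A - 1
  have hN : N.PosSemidef := le_iff.1 hA
  have hA_pd : A.PosDef := by simpa [N] using PosDef.one.add_posSemidef hN
  have hA_unit : IsUnit A.det := (isUnit_iff_isUnit_det A).1 hA_pd.isUnit
  have hconj : (A⁻¹)ᴴ * (N + Nᴴ * N) * A⁻¹ = 1 - A⁻¹ := by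
    have hAN : N + Nᴴ * N = A * A - A := by
      simp only [N, hN.1.eq]
      noncomm_ring
    rw [hAN, hA_pd.inv.1.eq, Matrix.mul_sub, Matrix.sub_mul, ← Matrix.mul_assoc,
      nonsing_inv_mul _ hA_unit]
    simp only [Matrix.one_mul, mul_nonsing_inv _ hA_unit]
  rw [le_iff, ← hconj]
  exact (hN.add (posSemidef_conjTranspose_mul_self N)).conjTranspose_mul_mul_same _

lemma sum_sq_le_card_of_nonneg_of_le_one {P : Matrix n n ℝ} (h0 : 0 ≤ P) (h1 : P ≤ 1) :
    ∑ i, ∑ j, P i j ^ 2 ≤ Fintype.card n := by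
  have hP : P.PosSemidef := nonneg_iff_posSemidef.1 h0
  set R := CFC.sqrt P
  have hR : Rᴴ = R := (CFC.sqrt_nonneg P).isSelfAdjoint.star_eq
  have hRR : R * R = P := CFC.sqrt_mul_sqrt_self P h0
  have hsq : ∑ i, ∑ j, P i j ^ 2 = (P * P).trace := by
    simp only [trace, diag, mul_apply, sq]
    exact Finset.sum_congr rfl fun i _ => Finset.sum_congr rfl fun j _ => by
      rw [show P j i = P i j by simpa using hP.1.apply i j]
  have hconj : Rᴴ * (1 - P) * R = P - P * P := by
    rw [hR, Matrix.mul_sub, Matrix.sub_mul, Matrix.mul_one, hRR, ← hRR]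
    simp only [Matrix.mul_assoc]
  have h_sq_le : (P * P).trace ≤ P.trace := by
    have := ((le_iff.1 h1).conjTranspose_mul_mul_same R).trace_nonneg
    rw [hconj, trace_sub] at this
    linarith
  have h_le_card : P.trace ≤ Fintype.card n := by
    have := (le_iff.1 h1).trace_nonneg
    rw [trace_sub, trace_one] at this
    linarith
  linarith

lemma PosDef.log_det_le_trace_sub_card {C : Matrix n n ℝ} (hC : C.PosDef) :
    Real.log C.det ≤ C.trace - Fintype.card n := by
  have hdet : C.det = ∏ i, hC.1.eigenvalues i := by simpa using hC.1.det_eq_prod_eigenvalues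
  have htr : C.trace = ∑ i, hC.1.eigenvalues i := by simpa using hC.1.trace_eq_sum_eigenvalues
  rw [hdet, htr, Real.log_prod fun i _ => (hC.eigenvalues_pos i).ne']
  calc ∑ i, Real.log (hC.1.eigenvalues i) ≤ ∑ i, (hC.1.eigenvalues i - 1) :=
        Finset.sum_le_sum fun i _ => Real.log_le_sub_one_of_pos (hC.eigenvalues_pos i)
    _ = ∑ i, hC.1.eigenvalues i - Fintype.card n := by simp [Finset.sum_sub_distrib]

lemma PosDef.log_det_le_log_det_add_trace {A B : Matrix n n ℝ} (hA : A.PosDef)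
    (hB : B.PosDef) : Real.log B.det ≤ Real.log A.det + (A⁻¹ * (B - A)).trace := by
  set S := CFC.sqrt A⁻¹
  have hS : star S = S := (CFC.sqrt_nonneg A⁻¹).isSelfAdjoint.star_eq
  have hSS : S * S = A⁻¹ := CFC.sqrt_mul_sqrt_self _ hA.inv.posSemidef.nonneg
  have hSdet : S.det * S.det = A.det⁻¹ := by
    rw [← det_mul, hSS, det_nonsing_inv, Ring.inverse_eq_inv']
  have hS_unit : IsUnit S := (isUnit_iff_isUnit_det S).2
    (left_ne_zero_of_mul (hSdet ▸ inv_ne_zero hA.det_pos.ne')).isUnit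
  have hC : (star S * B * S).PosDef := (IsUnit.posDef_star_left_conjugate_iff hS_unit).2 hB
  have hdet : (star S * B * S).det = A.det⁻¹ * B.det := by
    rw [hS, det_mul, det_mul, ← hSdet]
    ring
  have htr : (star S * B * S).trace = (A⁻¹ * B).trace := by
    rw [hS, trace_mul_cycle, hSS]
  have hAB : (A⁻¹ * (B - A)).trace = (A⁻¹ * B).trace - Fintype.card n := by
    rw [Matrix.mul_sub, nonsing_inv_mul _ ((isUnit_iff_isUnit_det A).1 hA.isUnit), trace_sub,
      trace_one]
  have := hC.log_det_le_trace_sub_card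
  rw [hdet, htr, Real.log_mul (inv_ne_zero hA.det_pos.ne') hB.det_pos.ne', Real.log_inv] at this
  linarith

end Matrix

open Matrix in
theorem stmt_11_general (T : ℕ) (M E : Matrix (Fin T) (Fin T) ℝ)
    (hM : M.PosSemidef) (lam : ℝ) (hlam : 0 < lam)
    (hpd : ((1 : Matrix (Fin T) (Fin T) ℝ) + lam⁻¹ • M + lam⁻¹ • E).PosDef) :
    Real.log ((1 : Matrix (Fin T) (Fin T) ℝ) + lam⁻¹ • M + lam⁻¹ • E).det ≤
      Real.log ((1 : Matrix (Fin T) (Fin T) ℝ) + lam⁻¹ • M).det +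
        Real.sqrt T * Real.sqrt (∑ i, ∑ j, (E i j) ^ 2) / lam := by
  set A : Matrix (Fin T) (Fin T) ℝ := 1 + lam⁻¹ • M
  have hM' : (lam⁻¹ • M).PosSemidef := hM.smul (inv_nonneg.2 hlam.le)
  have hA : A.PosDef := PosDef.one.add_posSemidef hM'
  have hA_inv_le : A⁻¹ ≤ 1 := inv_le_one_of_one_le (le_iff.2 (by simpa [A] using hM'))
  have hCS : (A⁻¹ * E).trace ≤ √T * √(∑ i, ∑ j, E i j ^ 2) := by
    refine (trace_mul_le_sqrt_mul_sqrt _ _).trans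
      (mul_le_mul_of_nonneg_right ?_ (Real.sqrt_nonneg _))
    simpa using Real.sqrt_le_sqrt (sum_sq_le_card_of_nonneg_of_le_one
      (nonneg_iff_posSemidef.2 hA.inv.posSemidef) hA_inv_le)
  calc Real.log (A + lam⁻¹ • E).det
      ≤ Real.log A.det + (A⁻¹ * (A + lam⁻¹ • E - A)).trace :=
        hA.log_det_le_log_det_add_trace hpd
    _ = Real.log A.det + lam⁻¹ * (A⁻¹ * E).trace := by
        rw [add_sub_cancel_left, Matrix.mul_smul, trace_smul, smul_eq_mul]
    _ ≤ Real.log A.det + lam⁻¹ * (√T * √(∑ i, ∑ j, E i j ^ 2)) := by gcongr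
    _ = Real.log A.det + √T * √(∑ i, ∑ j, E i j ^ 2) / lam := by ring

theorem stmt_11 (T : ℕ) (M E : Matrix (Fin T) (Fin T) ℝ)
    (hM : M.PosSemidef) (lam : ℝ) (hlam : 0 < lam)
    (hE : E.IsSymm)
    (hpd : ((1 : Matrix (Fin T) (Fin T) ℝ) + lam⁻¹ • M + lam⁻¹ • E).PosDef) :
    Real.log ((1 : Matrix (Fin T) (Fin T) ℝ) + lam⁻¹ • M + lam⁻¹ • E).det ≤
      Real.log ((1 : Matrix (Fin T) (Fin T) ℝ) + lam⁻¹ • M).det +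
        Real.sqrt T * Real.sqrt (∑ i, ∑ j, (E i j) ^ 2) / lam :=
  stmt_11_general T M E hM lam hlam hpd
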